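/- Let μ be a partition with all parts ≥ 2 and |μ| = k ≥ 2, let n ≥ k, and let I be a perfect matching of Fin (2n). Let π be a permutation of Fin (2n) whose nontrivial orbit sizes form the multiset of parts of μ, and let τ be the partition with all parts ≥ 2 such that d(I, π I π⁻¹) = 2(τ, 1^{n−|τ|}). Then |τ| ≤ k, and if |τ| = k then τ = μ. -/

import Mathlib

/-- The multiset of cardinalities of the orbits of a subgroup of permutations
acting on a finite type. -/
noncomputable def orbitSizes {α : Type*} [Fintype α] (G : Subgroup (Equiv.Perm α)) :
    Multiset ℕ :=
  letI : Fintype (Quotient (MulAction.orbitRel G α)) := Fintype.ofFinite _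
  (Finset.univ : Finset (Quotient (MulAction.orbitRel G α))).val.map
    fun q => Nat.card (MulAction.orbit G q.out)

/-- `d(A,B)`. -/
noncomputable def dMatch {N : ℕ} (A B : Equiv.Perm (Fin N)) : Multiset ℕ :=
  orbitSizes (Subgroup.closure {A, B})

/-- The multiset of sizes of the orbits of the cyclic group generated by a
permutation (the cycle type, counting fixed points as parts equal to 1). -/
noncomputable def permOrbitSizes {N : ℕ} (π : Equiv.Perm (Fin N)) : Multiset ℕ :=
  orbitSizes (Subgroup.zpowers π)

/-- Doubling every part of a partition (as a multiset). -/
def twice (m : Multiset ℕ) : Multiset ℕ := m.map (fun i => 2 * i)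

/-- Perfect matchings of the complete graph on `Fin N`. -/
abbrev PerfMatching (N : ℕ) := {A : Equiv.Perm (Fin N) // A * A = 1 ∧ ∀ x, A x ≠ x}

/-! Write `A = I` and `B = π I π⁻¹`, two fixed-point-free involutions. The group `⟨A, B⟩` is
dihedral, so each of its orbits is an `⟨AB⟩`-orbit `O` together with its mirror image `A(O)`,
and the two are disjoint because `A` and `B` have no fixed points. Hence the hypothesis on
`d(I, πIπ⁻¹)` says precisely that the cycle type of `AB` is `τ + τ`. Since
`AB = (IπI⁻¹)π⁻¹` is a product of two permutations each moving `k` points, `AB` moves at most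
`2k` points, i.e. `|τ| ≤ k`; when `|τ| = k` the two factors have disjoint supports, so the
cycle type of `AB` is also `μ + μ`, and `τ = μ`. -/

open MulAction Subgroup Finset

theorem Multiset.filter_two_le_add_replicate_one {M : Multiset ℕ} (hM : ∀ i ∈ M, 2 ≤ i)
    (r : ℕ) : (M + replicate r 1).filter (2 ≤ ·) = M := by
  rw [filter_add, filter_eq_self.mpr hM, filter_eq_nil.mpr, add_zero]
  intro a ha
  rw [eq_of_mem_replicate ha]
  omega

theorem Multiset.eq_of_add_self_eq_add_self {α : Type*} [DecidableEq α] {M N : Multiset α}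
    (h : M + M = N + N) : M = N := by
  ext a
  have := congrArg (count a) h
  simp only [count_add] at this
  omega

namespace Equiv.Perm

variable {α : Type*}

theorem mem_orbit_zpowers_iff {σ : Perm α} {x y : α} :
    y ∈ orbit (zpowers σ) x ↔ σ.SameCycle x y :=
  ⟨fun ⟨⟨_, m, rfl⟩, h⟩ => ⟨m, h⟩, fun ⟨m, h⟩ => ⟨⟨_, m, rfl⟩, h⟩⟩

theorem orbit_zpowers_of_apply_eq {σ : Perm α} {x : α} (hx : σ x = x) :
    orbit (zpowers σ) x = {x} := by
  ext y
  simp [mem_orbit_zpowers_iff, SameCycle, zpow_apply_eq_self_of_apply_eq_self hx, eq_comm]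

theorem conj_mul_self_eq_one {A : Perm α} (hA : A * A = 1) (π : Perm α) :
    π * A * π⁻¹ * (π * A * π⁻¹) = 1 := by
  rw [show π * A * π⁻¹ * (π * A * π⁻¹) = π * (A * A) * π⁻¹ by group, hA, mul_one,
    mul_inv_cancel]

theorem conj_apply_ne_self {A : Perm α} (hA' : ∀ x, A x ≠ x) (π : Perm α) (x : α) :
    (π * A * π⁻¹) x ≠ x := by
  rw [Perm.mul_apply, Perm.mul_apply, ← eq_inv_iff_eq.ne]
  exact hA' _

section Involutions

variable {A B : Perm α} (hA : A * A = 1) (hB : B * B = 1)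
include hA hB

theorem mul_zpow_mul_eq_zpow_neg_mul (m : ℤ) :
    A * (A * B) ^ m = (A * B) ^ (-m) * A := by
  have h : SemiconjBy A (A * B) (A * B)⁻¹ := by
    rw [SemiconjBy, mul_inv_rev, inv_eq_of_mul_eq_one_right hA, inv_eq_of_mul_eq_one_right hB,
      ← mul_assoc, hA, one_mul, mul_assoc, hA, mul_one]
  have := h.zpow_right m
  rwa [inv_zpow'] at this

theorem exists_zpow_of_mem_closure_pair {c : Perm α} (hc : c ∈ closure {A, B}) :
    ∃ m : ℤ, c = (A * B) ^ m ∨ c = (A * B) ^ m * A := by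
  have hAg := mul_zpow_mul_eq_zpow_neg_mul hA hB
  induction hc using closure_induction with
  | mem c hc =>
    rcases hc with rfl | rfl
    · exact ⟨0, .inr (by rw [zpow_zero, one_mul])⟩
    · refine ⟨-1, .inr ?_⟩
      rw [← hAg, zpow_one, ← mul_assoc, hA, one_mul]
  | one => exact ⟨0, .inl (zpow_zero _).symm⟩
  | mul c d _ _ hc hd =>
    obtain ⟨m, rfl | rfl⟩ := hc <;> obtain ⟨n, rfl | rfl⟩ := hd
    · exact ⟨m + n, .inl (zpow_add _ _ _).symm⟩
    · exact ⟨m + n, .inr (by rw [← mul_assoc, ← zpow_add])⟩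
    · exact ⟨m + -n, .inr (by rw [mul_assoc, hAg, ← mul_assoc, ← zpow_add])⟩
    · refine ⟨m + -n, .inl ?_⟩
      rw [mul_assoc, ← mul_assoc A, hAg, mul_assoc, hA, mul_one, ← zpow_add]
  | inv c _ hc =>
    obtain ⟨m, rfl | rfl⟩ := hc
    · exact ⟨-m, .inl (zpow_neg _ _).symm⟩
    · refine ⟨m, .inr ?_⟩
      rw [mul_inv_rev, inv_eq_of_mul_eq_one_right hA, ← zpow_neg, hAg, neg_neg]

theorem orbit_closure_pair (x : α) :
    orbit (closure {A, B}) x = orbit (zpowers (A * B)) x ∪ A '' orbit (zpowers (A * B)) x := by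
  have hg : A * B ∈ closure {A, B} := mul_mem (subset_closure (by simp)) (subset_closure (by simp))
  ext y
  simp only [Set.mem_union, Set.mem_image, mem_orbit_zpowers_iff, SameCycle]
  constructor
  · rintro ⟨⟨c, hc⟩, rfl⟩
    obtain ⟨m, rfl | rfl⟩ := exists_zpow_of_mem_closure_pair hA hB hc
    · exact .inl ⟨m, rfl⟩
    · refine .inr ⟨_, ⟨-m, rfl⟩, ?_⟩
      rw [← Perm.mul_apply, mul_zpow_mul_eq_zpow_neg_mul hA hB, neg_neg]; rfl
  · rintro (⟨m, rfl⟩ | ⟨_, ⟨m, rfl⟩, rfl⟩)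
    · exact ⟨⟨_, zpow_mem hg m⟩, rfl⟩
    · exact ⟨⟨_, mul_mem (subset_closure (by simp)) (zpow_mem hg m)⟩, rfl⟩

variable (hA' : ∀ x, A x ≠ x) (hB' : ∀ x, B x ≠ x)
include hA' hB'

theorem disjoint_orbit_zpowers_mul_image (x : α) :
    _root_.Disjoint (orbit (zpowers (A * B)) x) (A '' orbit (zpowers (A * B)) x) := by
  have hAg (m : ℤ) (y : α) : A (((A * B) ^ m) y) = ((A * B) ^ (-m)) (A y) :=
    DFunLike.congr_fun (mul_zpow_mul_eq_zpow_neg_mul hA hB m) y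
  have hadd (m n : ℤ) (y : α) : ((A * B) ^ m) (((A * B) ^ n) y) = ((A * B) ^ (m + n)) y := by
    rw [zpow_add, Perm.mul_apply]
  simp only [Set.disjoint_right, Set.mem_image, mem_orbit_zpowers_iff, SameCycle]
  rintro _ ⟨_, ⟨a, rfl⟩, rfl⟩ ⟨b, hb⟩
  have hAx : A x = ((A * B) ^ (a + b)) x := by
    rw [← hadd, hb, hAg, hadd, add_neg_cancel, zpow_zero, one_apply]
  -- `A` (for `a + b` even) or `B` (for `a + b` odd) fixes `(AB)^⌊(a + b)/2⌋ x`.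
  obtain ⟨m, hm⟩ | ⟨m, hm⟩ := Int.even_or_odd (a + b)
  · apply hA' (((A * B) ^ m) x)
    rw [hAg, hAx, hadd, hm, neg_add_cancel_left]
  · apply hB' (((A * B) ^ m) x)
    have hB_apply (y : α) : B y = A (((A * B) ^ (1 : ℤ)) y) := by
      rw [zpow_one, ← Perm.mul_apply, ← mul_assoc, hA, one_mul]
    rw [hB_apply, hadd, hAg, hAx, hadd, hm, show -(1 + m) + (2 * m + 1) = m by ring]

end Involutions

end Equiv.Perm

variable {α : Type*} [Fintype α]

theorem count_orbitSizes_mul (H : Subgroup (Equiv.Perm α)) (s : ℕ) :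
    (orbitSizes H).count s * s = #{x : α | Nat.card (orbit H x) = s} := by
  classical
  let _ : Fintype (Quotient (orbitRel H α)) := Fintype.ofFinite _
  let size (q : Quotient (orbitRel H α)) : ℕ := Nat.card (orbit H q.out)
  have hsizes : orbitSizes H = (univ : Finset _).val.map size := rfl
  have hsize (x : α) : size (Quotient.mk _ x) = Nat.card (orbit H x) := by
    simp only [size, orbit_eq_iff.mpr (orbitRel_apply.mp (Quotient.mk_out x))]
  have hfiber (q : Quotient (orbitRel H α)) : #{x | Quotient.mk _ x = q} = size q := by
    rw [show size q = _ from Nat.card_eq_card_toFinset (orbit H q.out)]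
    congr 1; ext x
    simp [← orbitRel_apply, ← Quotient.eq (r := orbitRel H α)]
  calc (orbitSizes H).count s * s = ∑ q with size q = s, size q := by
        rw [sum_congr rfl fun q hq => (mem_filter.1 hq).2, sum_const, smul_eq_mul, hsizes,
          Multiset.count_map]
        simp only [eq_comm]; rfl
    _ = ∑ q with size q = s, #{x | Quotient.mk _ x = q} := by simp only [hfiber]
    _ = #{x : α | Nat.card (orbit H x) = s} := by
        rw [card_eq_sum_card_fiberwise (f := Quotient.mk (orbitRel H α)) (t := {q | size q = s})]
        · refine sum_congr rfl fun q hq => ?_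
          rw [filter_filter]
          congr 1; ext x
          simp only [mem_filter, mem_univ, true_and] at hq ⊢
          exact ⟨fun h => ⟨by rw [← hsize, h, hq], h⟩, And.right⟩
        · intro x hx; simpa [hsize] using hx

namespace Equiv.Perm

section CycleType

variable [DecidableEq α]

theorem orbit_zpowers_eq_support_cycleOf {σ : Perm α} {x : α} (hx : σ x ≠ x) :
    orbit (zpowers σ) x = (σ.cycleOf x).support := by
  ext y
  rw [mem_orbit_zpowers_iff, Finset.mem_coe, mem_support_cycleOf_iff' hx]

theorem count_cycleType_mul (σ : Perm α) {s : ℕ} (hs : 2 ≤ s) :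
    σ.cycleType.count s * s = #{x | #(σ.cycleOf x).support = s} := by
  have hcount : σ.cycleType.count s = #{c ∈ σ.cycleFactorsFinset | #c.support = s} := by
    rw [cycleType_def, Multiset.count_map, card_def, filter_val]
    simp only [Function.comp_apply, eq_comm]
  have hmaps : Set.MapsTo σ.cycleOf ↑({x | #(σ.cycleOf x).support = s} : Finset α)
      ↑({c ∈ σ.cycleFactorsFinset | #c.support = s} : Finset (Perm α)) := by
    intro x hx
    simp only [coe_filter, mem_univ, true_and, Set.mem_ofPred_eq] at hx ⊢
    refine ⟨cycleOf_mem_cycleFactorsFinset_iff.mpr ?_, hx⟩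
    exact mem_support.mpr (two_le_card_support_cycleOf_iff.mp (hx ▸ hs))
  rw [card_eq_sum_card_fiberwise hmaps, hcount, card_eq_sum_ones, sum_mul, one_mul]
  refine sum_congr rfl fun c hc => ?_
  obtain ⟨hcσ, rfl⟩ := mem_filter.mp hc
  congr 1; ext x
  simp only [filter_filter, mem_filter, mem_univ, true_and]
  constructor
  · intro hx
    rw [← cycle_is_cycleOf hx hcσ]
    exact ⟨rfl, rfl⟩
  · rintro ⟨hx, rfl⟩
    exact mem_support_cycleOf_iff.mpr ⟨SameCycle.refl _ _,
      mem_support.mpr (two_le_card_support_cycleOf_iff.mp (hx ▸ hs))⟩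

theorem count_orbitSizes_zpowers (σ : Perm α) {s : ℕ} (hs : 2 ≤ s) :
    (orbitSizes (zpowers σ)).count s = σ.cycleType.count s := by
  refine Nat.eq_of_mul_eq_mul_right (by omega : 0 < s) ?_
  rw [count_orbitSizes_mul, count_cycleType_mul σ hs]
  congr 1; ext x
  simp only [mem_filter, mem_univ, true_and]
  by_cases hx : σ x = x
  · rw [orbit_zpowers_of_apply_eq hx, (cycleOf_eq_one_iff σ).mpr hx]
    simp only [Nat.card_unique, support_one, card_empty]
    omega
  · rw [orbit_zpowers_eq_support_cycleOf hx, Nat.card_coe_set_eq, Set.ncard_coe_finset]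

theorem cycleType_eq_filter_orbitSizes (σ : Perm α) :
    σ.cycleType = (orbitSizes (zpowers σ)).filter (2 ≤ ·) := by
  ext s
  by_cases hs : 2 ≤ s
  · rw [Multiset.count_filter_of_pos hs, count_orbitSizes_zpowers σ hs]
  · rw [Multiset.count_filter_of_neg hs,
      Multiset.count_eq_zero.mpr fun h => hs (two_le_of_mem_cycleType h)]

theorem card_support_mul_le (f g : Perm α) : #(f * g).support ≤ #f.support + #g.support :=
  (card_le_card (support_mul_le f g)).trans (card_union_le _ _)

theorem disjoint_of_card_support_mul {f g : Perm α}
    (h : #f.support + #g.support ≤ #(f * g).support) : f.Disjoint g := by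
  rw [disjoint_iff_disjoint_support, ← card_union_eq_card_add_card]
  exact le_antisymm (card_union_le _ _) (h.trans (card_le_card (support_mul_le f g)))

end CycleType

section Involutions

variable {A B : Perm α} (hA : A * A = 1) (hB : B * B = 1) (hA' : ∀ x, A x ≠ x)
  (hB' : ∀ x, B x ≠ x)
include hA hB hA' hB'

theorem card_orbit_closure_pair (x : α) :
    Nat.card (orbit (closure {A, B}) x) = 2 * Nat.card (orbit (zpowers (A * B)) x) := by
  rw [orbit_closure_pair hA hB, Nat.card_coe_set_eq, Nat.card_coe_set_eq,
    Set.ncard_union_eq (disjoint_orbit_zpowers_mul_image hA hB hA' hB' x),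
    Set.ncard_image_of_injective _ A.injective, two_mul]

theorem count_orbitSizes_zpowers_mul {s : ℕ} (hs : s ≠ 0) :
    (orbitSizes (zpowers (A * B))).count s = 2 * (orbitSizes (closure {A, B})).count (2 * s) := by
  refine Nat.eq_of_mul_eq_mul_right (Nat.pos_of_ne_zero hs) ?_
  rw [count_orbitSizes_mul, show ∀ c : ℕ, 2 * c * s = c * (2 * s) from fun c => by ring,
    count_orbitSizes_mul]
  congr 1; ext x
  simp only [mem_filter, mem_univ, true_and, card_orbit_closure_pair hA hB hA' hB']
  omega

theorem cycleType_mul_of_orbitSizes_closure_pair [DecidableEq α] {m : Multiset ℕ}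
    (h : orbitSizes (closure {A, B}) = twice m) : (A * B).cycleType = (m + m).filter (2 ≤ ·) := by
  ext s
  by_cases hs : 2 ≤ s
  · rw [Multiset.count_filter_of_pos hs, ← count_orbitSizes_zpowers _ hs,
      count_orbitSizes_zpowers_mul hA hB hA' hB' (by omega), h, twice,
      Multiset.count_map_eq_count' _ _ (mul_right_injective₀ two_ne_zero), Multiset.count_add,
      two_mul]
  · rw [Multiset.count_filter_of_neg hs,
      Multiset.count_eq_zero.mpr fun h => hs (two_le_of_mem_cycleType h)]

end Involutions

end Equiv.Perm

open Equiv

theorem d_conj_bound_general (μ : Multiset ℕ) (hμ : ∀ i ∈ μ, 2 ≤ i)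
    (k n : ℕ) (hk : μ.sum = k)
    (I : PerfMatching (2 * n)) (π : Equiv.Perm (Fin (2 * n)))
    (hπ : permOrbitSizes π = μ + Multiset.replicate (2 * n - k) 1)
    (τ : Multiset ℕ) (hτ : ∀ i ∈ τ, 2 ≤ i)
    (hd : dMatch I.1 (π * I.1 * π⁻¹) = twice (τ + Multiset.replicate (n - τ.sum) 1)) :
    τ.sum ≤ k ∧ (τ.sum = k → τ = μ) := by
  obtain ⟨A, hA, hA'⟩ := I
  have hπμ : π.cycleType = μ := by
    rw [Perm.cycleType_eq_filter_orbitSizes, ← permOrbitSizes, hπ,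
      Multiset.filter_two_le_add_replicate_one hμ]
  have hAB : (A * (π * A * π⁻¹)).cycleType = τ + τ := by
    rw [Perm.cycleType_mul_of_orbitSizes_closure_pair hA (Perm.conj_mul_self_eq_one hA π) hA'
      (Perm.conj_apply_ne_self hA' π) hd, Multiset.filter_add,
      Multiset.filter_two_le_add_replicate_one hτ]
  have hfactor : A * (π * A * π⁻¹) = A * π * A⁻¹ * π⁻¹ := by
    rw [inv_eq_of_mul_eq_one_right hA]; group
  have hcard : #(A * (π * A * π⁻¹)).support = 2 * τ.sum := by
    rw [← Perm.sum_cycleType, hAB, Multiset.sum_add, two_mul]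
  have hcard_factors : #(A * π * A⁻¹).support + #π⁻¹.support = 2 * k := by
    rw [Perm.card_support_conj, Perm.support_inv, ← Perm.sum_cycleType, hπμ, hk, two_mul]
  have hle := Perm.card_support_mul_le (A * π * A⁻¹) π⁻¹
  rw [← hfactor] at hle
  refine ⟨by omega, fun hτk => Multiset.eq_of_add_self_eq_add_self ?_⟩
  have hdisj : (A * π * A⁻¹).Disjoint π⁻¹ :=
    Perm.disjoint_of_card_support_mul (by rw [← hfactor]; omega)
  rw [← hAB, hfactor, hdisj.cycleType_mul, Perm.cycleType_conj, Perm.cycleType_inv, hπμ]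

/-- Let `μ` be a partition with all parts `≥ 2` and `|μ| = k ≥ 2`, let `n ≥ k`, and let
`I` be a perfect matching of `Fin (2n)`. If `π` is a permutation of `Fin (2n)` whose
nontrivial orbit sizes form the multiset `μ` (so its full cycle type is
`(μ, 1^{2n−k})`), and `τ` is the partition with all parts `≥ 2` such that
`d(I, π I π⁻¹) = 2(τ, 1^{n−|τ|})`, then `|τ| ≤ k`, and `|τ| = k` forces `τ = μ`. -/
theorem d_conj_bound (μ : Multiset ℕ) (hμ : ∀ i ∈ μ, 2 ≤ i)
    (k n : ℕ) (hk : μ.sum = k) (hk2 : 2 ≤ k) (hn : k ≤ n)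
    (I : PerfMatching (2 * n)) (π : Equiv.Perm (Fin (2 * n)))
    (hπ : permOrbitSizes π = μ + Multiset.replicate (2 * n - k) 1)
    (τ : Multiset ℕ) (hτ : ∀ i ∈ τ, 2 ≤ i) (hτn : τ.sum ≤ n)
    (hd : dMatch I.1 (π * I.1 * π⁻¹) = twice (τ + Multiset.replicate (n - τ.sum) 1)) :
    τ.sum ≤ k ∧ (τ.sum = k → τ = μ) :=
  d_conj_bound_general μ hμ k n hk I π hπ τ hτ hd
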